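/- For real parameters θ¹, θ² with θ¹+θ² > 0 and θ¹−θ² > 0, one has ∫_{ℝ} log(sech x) · p(x;θ¹,θ²) dx = (1/2)ψ((θ¹−θ²)/2) + (1/2)ψ((θ¹+θ²)/2) − ψ(θ¹) + log 2. -/

import Mathlib

open MeasureTheory

/-- The hyperbolic secant function: `sech x = 2 / (eˣ + e⁻ˣ)`. -/
noncomputable def sech (x : ℝ) : ℝ := 1 / Real.cosh x

/-- The beta-logistic density. -/
noncomputable def betaLogisticPDF (θ1 θ2 x : ℝ) : ℝ :=
  (2 : ℝ) ^ (1 - θ1) * sech x ^ θ1 * Real.exp (θ2 * x) /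
    (Real.Gamma ((θ1 - θ2) / 2) * Real.Gamma ((θ1 + θ2) / 2) / Real.Gamma θ1)

/-- The digamma function `ψ(z) = d/dz log Γ(z)`. -/
noncomputable def digamma (z : ℝ) : ℝ := deriv (fun x => Real.log (Real.Gamma x)) z

/-!
Under the measure `exp (θ₂ x) dx` the function `Z(s) = ∫ exp (θ₂ x) sech x ^ s dx` is the
moment generating function of `log ∘ sech`, and the beta-logistic density is
`exp (θ₂ x) sech x ^ θ₁ / Z(θ₁)`. Hence the mean of `log (sech X)` is the derivative at `θ₁`
of the cumulant generating function `log Z`. The substitution `t = σ(2x)` (`σ` the logistic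
sigmoid) gives `Z(s) = 2 ^ (s - 1) B((s + θ₂)/2, (s - θ₂)/2)`, whose logarithmic derivative
is `log 2 + ψ((s + θ₂)/2)/2 + ψ((s - θ₂)/2)/2 - ψ(s)`.
-/

open Real Set MeasureTheory Filter Topology ProbabilityTheory

lemma sech_pos (x : ℝ) : 0 < sech x :=
  one_div_pos.2 (cosh_pos x)

lemma sech_neg (x : ℝ) : sech (-x) = sech x := by
  rw [sech, sech, cosh_neg]

lemma sigmoid_two_mul (x : ℝ) : sigmoid (2 * x) = exp x * sech x / 2 := by
  rw [sigmoid_def, sech, cosh_eq, show -(2 * x) = -x + -x by ring, exp_add]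
  field_simp
  rw [add_mul, one_mul, sq, mul_assoc, ← exp_add, neg_add_cancel, exp_zero, mul_one]

lemma log_sigmoid_two_mul (x : ℝ) : log (sigmoid (2 * x)) = x + log (sech x) - log 2 := by
  rw [sigmoid_two_mul, log_div (mul_pos (exp_pos x) (sech_pos x)).ne' two_ne_zero,
    log_mul (exp_pos x).ne' (sech_pos x).ne', log_exp]

lemma hasDerivAt_sigmoid_two_mul (x : ℝ) :
    HasDerivAt (fun x => sigmoid (2 * x)) (2 * (sigmoid (2 * x) * sigmoid (-(2 * x)))) x := by
  have h := (hasDerivAt_sigmoid (2 * x)).comp x ((hasDerivAt_id' x).const_mul 2)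
  rw [sigmoid_neg]
  exact h.congr_deriv (by ring)

lemma abs_deriv_mul_beta_integrand_sigmoid_two_mul (s θ x : ℝ) :
    |2 * (sigmoid (2 * x) * sigmoid (-(2 * x)))| *
        (sigmoid (2 * x) ^ ((s + θ) / 2 - 1) * (1 - sigmoid (2 * x)) ^ ((s - θ) / 2 - 1)) =
      2 ^ (1 - s) * (exp (θ * x) * sech x ^ s) := by
  have hu : sigmoid (2 * x) = exp (x + log (sech x) - log 2) := by
    rw [← log_sigmoid_two_mul, exp_log (sigmoid_pos _)]
  have hv : sigmoid (-(2 * x)) = exp (-x + log (sech x) - log 2) := by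
    rw [← mul_neg, ← sech_neg, ← log_sigmoid_two_mul, exp_log (sigmoid_pos _)]
  rw [← sigmoid_neg, abs_of_pos (mul_pos two_pos (mul_pos (sigmoid_pos _) (sigmoid_pos _))),
    hu, hv, ← exp_mul, ← exp_mul, rpow_def_of_pos two_pos, rpow_def_of_pos (sech_pos x)]
  nth_rw 1 [← exp_log two_pos]
  simp only [← exp_add]
  congr 1
  ring

lemma ofReal_rpow_mul_one_sub_rpow {a b t : ℝ} (ht : t ∈ Ioo (0 : ℝ) 1) :
    ((t ^ (a - 1) * (1 - t) ^ (b - 1) : ℝ) : ℂ) =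
      (t : ℂ) ^ ((a : ℂ) - 1) * (1 - (t : ℂ)) ^ ((b : ℂ) - 1) := by
  rw [Complex.ofReal_mul, Complex.ofReal_cpow ht.1.le, Complex.ofReal_cpow (sub_pos.2 ht.2).le]
  push_cast
  rfl

lemma betaIntegral_ofReal_eq_integral_Ioo (a b : ℝ) :
    Complex.betaIntegral a b =
      ∫ t in Ioo (0 : ℝ) 1, ((t ^ (a - 1) * (1 - t) ^ (b - 1) : ℝ) : ℂ) := by
  rw [Complex.betaIntegral, intervalIntegral.integral_of_le zero_le_one,
    integral_Ioc_eq_integral_Ioo]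
  exact setIntegral_congr_fun measurableSet_Ioo fun t ht => (ofReal_rpow_mul_one_sub_rpow ht).symm

lemma integrableOn_rpow_mul_one_sub_rpow {a b : ℝ} (ha : 0 < a) (hb : 0 < b) :
    IntegrableOn (fun t : ℝ => t ^ (a - 1) * (1 - t) ^ (b - 1)) (Ioo 0 1) := by
  have h := (Complex.betaIntegral_convergent (u := a) (v := b) (by simpa) (by simpa)).1
  rw [integrableOn_Ioc_iff_integrableOn_Ioo] at h
  have h_re := (h.congr_fun (fun t ht => (ofReal_rpow_mul_one_sub_rpow ht).symm)
    measurableSet_Ioo).re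
  simp only [RCLike.re_to_complex, Complex.ofReal_re] at h_re
  exact h_re

lemma integral_Ioo_rpow_mul_one_sub_rpow_eq_beta {a b : ℝ} (ha : 0 < a) (hb : 0 < b) :
    ∫ t in Ioo (0 : ℝ) 1, t ^ (a - 1) * (1 - t) ^ (b - 1) = beta a b := by
  rw [beta_eq_betaIntegralReal a b ha hb, betaIntegral_ofReal_eq_integral_Ioo,
    integral_complex_ofReal, Complex.ofReal_re]

lemma strictMono_sigmoid_two_mul : StrictMono fun x : ℝ => sigmoid (2 * x) :=
  sigmoid_strictMono.comp (strictMono_mul_left_of_pos two_pos)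

lemma image_univ_sigmoid_two_mul : (fun x : ℝ => sigmoid (2 * x)) '' univ = Ioo 0 1 := by
  rw [image_univ, ← range_sigmoid]
  exact (mul_left_surjective₀ two_ne_zero).range_comp sigmoid

lemma integrable_exp_mul_sech_rpow {s θ : ℝ} (h : |θ| < s) :
    Integrable fun x => exp (θ * x) * sech x ^ s := by
  obtain ⟨hθ_neg, hθ⟩ := abs_lt.1 h
  have h_beta := integrableOn_rpow_mul_one_sub_rpow (a := (s + θ) / 2) (b := (s - θ) / 2)
    (by linarith) (by linarith)
  rw [← image_univ_sigmoid_two_mul, integrableOn_image_iff_integrableOn_abs_deriv_smul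
    MeasurableSet.univ (fun x _ => (hasDerivAt_sigmoid_two_mul x).hasDerivWithinAt)
    strictMono_sigmoid_two_mul.injective.injOn, integrableOn_univ] at h_beta
  simp only [smul_eq_mul, abs_deriv_mul_beta_integrand_sigmoid_two_mul] at h_beta
  refine (h_beta.const_mul (2 ^ (s - 1))).congr (ae_of_all _ fun x => ?_)
  dsimp only
  rw [← mul_assoc, ← rpow_add two_pos, sub_add_sub_cancel', sub_self, rpow_zero, one_mul]

lemma integral_exp_mul_sech_rpow {s θ : ℝ} (h : |θ| < s) :
    ∫ x, exp (θ * x) * sech x ^ s = 2 ^ (s - 1) * beta ((s + θ) / 2) ((s - θ) / 2) := by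
  obtain ⟨hθ_neg, hθ⟩ := abs_lt.1 h
  rw [← integral_Ioo_rpow_mul_one_sub_rpow_eq_beta (by linarith) (by linarith),
    ← image_univ_sigmoid_two_mul, integral_image_eq_integral_abs_deriv_smul MeasurableSet.univ
    (fun x _ => (hasDerivAt_sigmoid_two_mul x).hasDerivWithinAt)
    strictMono_sigmoid_two_mul.injective.injOn, Measure.restrict_univ]
  simp only [smul_eq_mul, abs_deriv_mul_beta_integrand_sigmoid_two_mul]
  rw [integral_const_mul, ← mul_assoc, ← rpow_add two_pos, sub_add_sub_cancel', sub_self,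
    rpow_zero, one_mul]

noncomputable def expTiltedVolume (θ : ℝ) : Measure ℝ :=
  volume.withDensity fun x => ENNReal.ofReal (exp (θ * x))

lemma integral_expTiltedVolume (θ : ℝ) (g : ℝ → ℝ) :
    ∫ x, g x ∂expTiltedVolume θ = ∫ x, exp (θ * x) * g x := by
  rw [expTiltedVolume, integral_withDensity_eq_integral_toReal_smul (by fun_prop)
    (ae_of_all _ fun _ => ENNReal.ofReal_lt_top)]
  simp only [ENNReal.toReal_ofReal (exp_pos _).le, smul_eq_mul]

lemma integrable_expTiltedVolume_iff {θ : ℝ} {g : ℝ → ℝ} :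
    Integrable g (expTiltedVolume θ) ↔ Integrable fun x => exp (θ * x) * g x := by
  rw [expTiltedVolume, integrable_withDensity_iff_integrable_smul' (by fun_prop)
    (ae_of_all _ fun _ => ENNReal.ofReal_lt_top)]
  simp only [ENNReal.toReal_ofReal (exp_pos _).le, smul_eq_mul]

lemma exp_mul_log_sech (s x : ℝ) : exp (s * log (sech x)) = sech x ^ s := by
  rw [rpow_def_of_pos (sech_pos x), mul_comm]

lemma mgf_log_sech (θ s : ℝ) :
    mgf (fun x => log (sech x)) (expTiltedVolume θ) s = ∫ x, exp (θ * x) * sech x ^ s := by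
  simp only [mgf, integral_expTiltedVolume, exp_mul_log_sech]

lemma mem_interior_integrableExpSet_log_sech {θ s : ℝ} (h : |θ| < s) :
    s ∈ interior (integrableExpSet (fun x => log (sech x)) (expTiltedVolume θ)) := by
  have h_Ioi : s ∈ interior (Ioi |θ|) := by rwa [isOpen_Ioi.interior_eq]
  refine interior_mono (fun t ht => ?_) h_Ioi
  show Integrable _ _
  simpa only [integrable_expTiltedVolume_iff, exp_mul_log_sech]
    using integrable_exp_mul_sech_rpow ht

lemma cgf_log_sech {θ s : ℝ} (h : |θ| < s) :
    cgf (fun x => log (sech x)) (expTiltedVolume θ) s =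
      (s - 1) * log 2 + log (Gamma ((s + θ) / 2)) + log (Gamma ((s - θ) / 2)) -
        log (Gamma s) := by
  obtain ⟨hθ_neg, hθ⟩ := abs_lt.1 h
  have h_add : 0 < (s + θ) / 2 := by linarith
  have h_sub : 0 < (s - θ) / 2 := by linarith
  have hΓ_add := Gamma_pos_of_pos h_add
  have hΓ_sub := Gamma_pos_of_pos h_sub
  have hΓ := Gamma_pos_of_pos ((abs_nonneg θ).trans_lt h)
  rw [cgf, mgf_log_sech, integral_exp_mul_sech_rpow h, beta,
    show (s + θ) / 2 + (s - θ) / 2 = s by ring, log_mul (by positivity) (by positivity),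
    log_rpow two_pos, log_div (by positivity) hΓ.ne', log_mul hΓ_add.ne' hΓ_sub.ne']
  ring

lemma hasDerivAt_log_Gamma {z : ℝ} (hz : 0 < z) :
    HasDerivAt (fun x => log (Gamma x)) (digamma z) z := by
  refine (((differentiableAt_Gamma fun m => ?_).log (Gamma_pos_of_pos hz).ne')).hasDerivAt
  linarith [(m.cast_nonneg : (0 : ℝ) ≤ m)]

lemma deriv_cgf_log_sech {θ s : ℝ} (h : |θ| < s) :
    deriv (cgf (fun x => log (sech x)) (expTiltedVolume θ)) s =
      log 2 + digamma ((s + θ) / 2) / 2 + digamma ((s - θ) / 2) / 2 - digamma s := by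
  obtain ⟨hθ_neg, hθ⟩ := abs_lt.1 h
  have h_eq : cgf (fun x => log (sech x)) (expTiltedVolume θ) =ᶠ[𝓝 s] fun t =>
      (t - 1) * log 2 + log (Gamma ((t + θ) / 2)) + log (Gamma ((t - θ) / 2)) -
        log (Gamma t) := by
    filter_upwards [isOpen_Ioi.mem_nhds h] with t ht using cgf_log_sech ht
  have h_add := (hasDerivAt_log_Gamma (by linarith : 0 < (s + θ) / 2)).comp s
    (((hasDerivAt_id' s).add_const θ).div_const 2)
  have h_sub := (hasDerivAt_log_Gamma (by linarith : 0 < (s - θ) / 2)).comp s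
    (((hasDerivAt_id' s).sub_const θ).div_const 2)
  have h_deriv : HasDerivAt (fun t =>
      (t - 1) * log 2 + log (Gamma ((t + θ) / 2)) + log (Gamma ((t - θ) / 2)) - log (Gamma t))
      (log 2 + digamma ((s + θ) / 2) / 2 + digamma ((s - θ) / 2) / 2 - digamma s) s :=
    ((((((hasDerivAt_id' s).sub_const 1).mul_const (log 2)).add h_add).add h_sub).sub
      (hasDerivAt_log_Gamma (by linarith : 0 < s))).congr_deriv (by ring)
  rw [h_eq.deriv_eq, h_deriv.deriv]

lemma betaLogisticPDF_eq_div_mgf {θ1 θ2 : ℝ} (h : |θ2| < θ1) (x : ℝ) :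
    betaLogisticPDF θ1 θ2 x =
      exp (θ2 * x) * sech x ^ θ1 / mgf (fun x => log (sech x)) (expTiltedVolume θ2) θ1 := by
  rw [mgf_log_sech, integral_exp_mul_sech_rpow h, betaLogisticPDF, beta,
    show (θ1 + θ2) / 2 + (θ1 - θ2) / 2 = θ1 by ring, show 1 - θ1 = -(θ1 - 1) by ring,
    rpow_neg zero_le_two]
  ring

/-- The mean of `log(sech X)` under the beta-logistic distribution is
`(1/2)ψ((θ¹−θ²)/2) + (1/2)ψ((θ¹+θ²)/2) − ψ(θ¹) + log 2`. -/
theorem betaLogistic_mean_log_sech (θ1 θ2 : ℝ) (h1 : 0 < θ1 + θ2) (h2 : 0 < θ1 - θ2) :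
    (∫ x : ℝ, Real.log (sech x) * betaLogisticPDF θ1 θ2 x) =
      (1 / 2) * digamma ((θ1 - θ2) / 2) + (1 / 2) * digamma ((θ1 + θ2) / 2) -
        digamma θ1 + Real.log 2 := by
  have h : |θ2| < θ1 := abs_lt.2 ⟨by linarith, by linarith⟩
  calc ∫ x, log (sech x) * betaLogisticPDF θ1 θ2 x
      = (∫ x, log (sech x) * exp (θ1 * log (sech x)) ∂expTiltedVolume θ2) /
          mgf (fun x => log (sech x)) (expTiltedVolume θ2) θ1 := by
        rw [integral_expTiltedVolume, ← integral_div]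
        congr 1 with x
        rw [betaLogisticPDF_eq_div_mgf h, exp_mul_log_sech]
        ring
    _ = deriv (cgf (fun x => log (sech x)) (expTiltedVolume θ2)) θ1 :=
        (deriv_cgf (mem_interior_integrableExpSet_log_sech h)).symm
    _ = _ := by
        rw [deriv_cgf_log_sech h]
        ring
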